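/- arXiv:2603.05609 — 3 statements merged into one kernel-verified Lean document; each statement's English description precedes it below -/
import Mathlib

section
/- Let ℓ be an even natural number and let E_ℓ(x) = Σ_{j=0}^{ℓ} x^j / j! denote the truncated exponential. Then for every real number x one has E_ℓ(x) · E_ℓ(−x) ≥ 1. -/
/-!
Write `f(x) = E_ℓ(x) E_ℓ(-x)`. Since `E_ℓ' = E_{ℓ-1}` and `E_ℓ = E_{ℓ-1} + x^ℓ/ℓ!`, for even `ℓ`
the product rule collapses to `f'(x) = x^ℓ/ℓ! · (E_{ℓ-1}(x) - E_{ℓ-1}(-x))`, which is `≥ 0` for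
`x ≥ 0` because `(-x)^j ≤ x^j` termwise. So `f` increases on `[0, ∞)` from `f(0) = 1`, and `f` is even.
-/

open Finset Nat

/-- `truncExp n` has `n` terms, so `E_ℓ = truncExp (ℓ + 1)`. -/
noncomputable def truncExp (n : ℕ) (x : ℝ) : ℝ :=
  ∑ j ∈ range n, x ^ j / (j ! : ℝ)

lemma truncExp_succ (n : ℕ) (x : ℝ) : truncExp (n + 1) x = truncExp n x + x ^ n / (n ! : ℝ) :=
  sum_range_succ _ _

lemma truncExp_succ_zero (n : ℕ) : truncExp (n + 1) 0 = 1 := by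
  simp [truncExp, sum_range_succ']

lemma hasDerivAt_truncExp (n : ℕ) (x : ℝ) :
    HasDerivAt (truncExp (n + 1)) (truncExp n x) x := by
  induction n with
  | zero =>
    have hone : truncExp 1 = fun _ => 1 := funext fun _ => by simp [truncExp]
    simpa [hone, truncExp] using hasDerivAt_const x (1 : ℝ)
  | succ n ih =>
    have hpow : HasDerivAt (fun y : ℝ => y ^ (n + 1) / ((n + 1) ! : ℝ)) (x ^ n / (n ! : ℝ)) x :=
      ((hasDerivAt_pow (n + 1) x).div_const _).congr_deriv (by
        rw [factorial_succ]
        push_cast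
        field_simp)
    rw [show truncExp (n + 1 + 1) = fun y => truncExp (n + 1) y + y ^ (n + 1) / ((n + 1) ! : ℝ)
      from funext (truncExp_succ (n + 1)), truncExp_succ]
    exact ih.add hpow

lemma truncExp_neg_le {x : ℝ} (hx : 0 ≤ x) (n : ℕ) : truncExp n (-x) ≤ truncExp n x := by
  refine sum_le_sum fun j _ => div_le_div_of_nonneg_right ?_ (by positivity)
  rcases j.even_or_odd with hj | hj
  · rw [hj.neg_pow]
  · rw [hj.neg_pow]
    linarith [pow_nonneg hx j]

lemma hasDerivAt_truncExp_mul_neg {n : ℕ} (hn : Even n) (x : ℝ) :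
    HasDerivAt (fun y => truncExp (n + 1) y * truncExp (n + 1) (-y))
      (x ^ n / (n ! : ℝ) * (truncExp n x - truncExp n (-x))) x := by
  refine ((hasDerivAt_truncExp n x).mul
    ((hasDerivAt_truncExp n (-x)).comp x (hasDerivAt_neg x))).congr_deriv ?_
  simp only [Function.comp_apply, truncExp_succ, hn.neg_pow]
  ring

lemma one_le_truncExp_mul_neg_of_nonneg {n : ℕ} (hn : Even n) {x : ℝ} (hx : 0 ≤ x) :
    1 ≤ truncExp (n + 1) x * truncExp (n + 1) (-x) := by
  have hderiv := hasDerivAt_truncExp_mul_neg hn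
  have hmono : MonotoneOn (fun y => truncExp (n + 1) y * truncExp (n + 1) (-y)) (Set.Ici 0) := by
    refine monotoneOn_of_hasDerivWithinAt_nonneg (convex_Ici 0)
      (fun y _ => (hderiv y).continuousAt.continuousWithinAt)
      (fun y _ => (hderiv y).hasDerivWithinAt) fun y hy => ?_
    rw [interior_Ici, Set.mem_Ioi] at hy
    exact mul_nonneg (by positivity) (sub_nonneg.mpr (truncExp_neg_le hy.le n))
  simpa [truncExp_succ_zero] using hmono Set.self_mem_Ici hx hx

theorem truncated_exp_product_ge_one (ℓ : ℕ) (hℓ : Even ℓ) (x : ℝ) :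
    1 ≤ (∑ j ∈ Finset.range (ℓ + 1), x ^ j / (Nat.factorial j)) *
        (∑ j ∈ Finset.range (ℓ + 1), (-x) ^ j / (Nat.factorial j)) := by
  change 1 ≤ truncExp (ℓ + 1) x * truncExp (ℓ + 1) (-x)
  rcases le_total 0 x with hx | hx
  · exact one_le_truncExp_mul_neg_of_nonneg hℓ hx
  · simpa only [neg_neg, mul_comm] using one_le_truncExp_mul_neg_of_nonneg hℓ (neg_nonneg.mpr hx)
end

section
/- Let ℓ ≥ 1 and let t be an integer with 1 ≤ t ≤ ℓ and t ≡ ℓ (mod 2). Then Σ_{ν=0}^{ℓ−t} (−1)^{t+ν} / ((ℓ−ν)! (t+ν)!) = ((−1)^t + (−1)^ℓ) / ((t+ℓ) · (t−1)! · ℓ!). -/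
/-!
Multiplied by `(t + ℓ)!`, the summands become `(-1) ^ k * (t + ℓ).choose k` for `t ≤ k ≤ ℓ`.
By Pascal's rule the partial alternating sums of the row `n + 1` are `(-1) ^ m * n.choose m`, so
the sum telescopes to `(-1) ^ ℓ * (t + ℓ - 1).choose ℓ - (-1) ^ (t - 1) * (t + ℓ - 1).choose (t - 1)`,
and the two binomial coefficients agree by symmetry.
-/

open Finset Nat

theorem Nat.inv_factorial_mul_factorial_eq_add_choose_div {K : Type*} [Field K] [CharZero K]
    (a b : ℕ) : ((a ! : K) * b !)⁻¹ = (a + b).choose a / (a + b)! := by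
  rw [Nat.cast_add_choose, div_div_cancel_left' (by exact_mod_cast (a + b).factorial_ne_zero)]

theorem sum_Ico_alternating_choose_add {R : Type*} [CommRing R] {a b : ℕ} (hab : a ≤ b) :
    ∑ k ∈ Ico (a + 1) (b + 1), (-1 : R) ^ k * (a + b + 1).choose k =
      ((-1) ^ (a + 1) + (-1) ^ b) * (a + b).choose a := by
  have h := congrArg (Int.cast : ℤ → R) <| sum_Ico_eq_sub
    (fun k ↦ ((-1) ^ k * (a + b + 1).choose k : ℤ)) (show a + 1 ≤ b + 1 by omega)
  simp only [Int.alternating_sum_range_choose_eq_choose] at h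
  push_cast at h
  rw [h, ← choose_symm_add, pow_succ]
  ring

theorem alternating_factorial_sum_general (ℓ t : ℕ) (ht1 : 1 ≤ t) (ht2 : t ≤ ℓ) :
    ∑ ν ∈ Finset.range (ℓ - t + 1),
        (-1 : ℝ) ^ (t + ν) / (Nat.factorial (ℓ - ν) * Nat.factorial (t + ν)) =
      ((-1 : ℝ) ^ t + (-1 : ℝ) ^ ℓ) /
        ((t + ℓ) * Nat.factorial (t - 1) * Nat.factorial ℓ) := by
  obtain ⟨a, rfl⟩ : ∃ a, t = a + 1 := ⟨t - 1, by omega⟩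
  have hterm : ∀ ν ∈ range (ℓ - (a + 1) + 1),
      (-1 : ℝ) ^ (a + 1 + ν) / ((ℓ - ν)! * (a + 1 + ν)!) =
        (-1) ^ (a + 1 + ν) * (a + ℓ + 1).choose (a + 1 + ν) / (a + ℓ + 1)! := by
    intro ν hν
    have hsplit : a + ℓ + 1 = (a + 1 + ν) + (ℓ - ν) := by grind
    rw [div_eq_mul_inv, mul_comm ((ℓ - ν)! : ℝ), inv_factorial_mul_factorial_eq_add_choose_div,
      ← hsplit, mul_div_assoc]
  rw [sum_congr rfl hterm, ← sum_div, ← Nat.sub_add_comm ht2,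
    ← sum_Ico_eq_sum_range (fun k ↦ (-1 : ℝ) ^ k * (a + ℓ + 1).choose k),
    sum_Ico_alternating_choose_add (by omega)]
  calc ((-1) ^ (a + 1) + (-1) ^ ℓ) * ((a + ℓ).choose a : ℝ) / (a + ℓ + 1)!
      = ((-1) ^ (a + 1) + (-1) ^ ℓ) / (a + ℓ + 1) * ((a + ℓ).choose a / (a + ℓ)!) := by
        rw [factorial_succ]; push_cast; field_simp
    _ = ((-1) ^ (a + 1) + (-1) ^ ℓ) / (a + ℓ + 1) * ((a ! : ℝ) * ℓ !)⁻¹ := by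
        rw [inv_factorial_mul_factorial_eq_add_choose_div]
    _ = _ := by rw [Nat.add_sub_cancel]; push_cast; field_simp; ring

theorem alternating_factorial_sum (ℓ t : ℕ) (hℓ : 1 ≤ ℓ) (ht1 : 1 ≤ t) (ht2 : t ≤ ℓ)
    (hpar : t % 2 = ℓ % 2) :
    ∑ ν ∈ Finset.range (ℓ - t + 1),
        (-1 : ℝ) ^ (t + ν) / (Nat.factorial (ℓ - ν) * Nat.factorial (t + ν)) =
      ((-1 : ℝ) ^ t + (-1 : ℝ) ^ ℓ) /
        ((t + ℓ) * Nat.factorial (t - 1) * Nat.factorial ℓ) :=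
  alternating_factorial_sum_general ℓ t ht1 ht2
end

section
/- Define h(x) = (10/9 − (4/3)x² + (1/3)x⁴)². Then: (1) h(x) ≥ 0 for all real x; (2) h(0) = 100/81 > 1; (3) writing h(x) = Σ_i a_i x^i, one has Σ_i a_{2i}·C(i) = 100/81·1 − 80/27·1 + 68/27·2 − 8/9·5 + 1/9·14 = 34/81 < 1/2, where C(i) is the i-th Catalan number (C(0)=1, C(1)=1, C(2)=2, C(3)=5, C(4)=14). -/
/-!
Nonnegativity is immediate since `h` is a square. Because a real polynomial is determined by its
values, the coefficients `a i` must be those of the expansion of the square, and the difference of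
binomial coefficients in the weighted sum is the Catalan number `C(i) = binom(2i, i) / (i + 1)`.
-/

open Finset Polynomial

theorem catalan_eq_choose_sub_choose {K : Type*} [Field K] [CharZero K] (n : ℕ) :
    (catalan n : K) = (2 * n).choose n - (2 * n).choose (n + 1) := by
  have hcat : ((n : K) + 1) * catalan n = (2 * n).choose n := by
    exact_mod_cast succ_mul_catalan_eq_centralBinom n
  have hnext : ((2 * n).choose (n + 1) : K) * (n + 1) = (2 * n).choose n * n := by
    have := Nat.choose_succ_right_eq (2 * n) n
    rw [show 2 * n - n = n by omega] at this
    exact_mod_cast this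
  have hpos : (n : K) + 1 ≠ 0 := by exact_mod_cast n.succ_ne_zero
  apply mul_left_cancel₀ hpos
  linear_combination hcat + hnext

theorem catalan_four : catalan 4 = 14 := by
  norm_num [catalan_eq_centralBinom_div, Nat.centralBinom, Nat.choose]

theorem coeff_eq_of_forall_sum_eq {R : Type*} [CommRing R] [IsDomain R] [Infinite R]
    {n : ℕ} {a b : ℕ → R}
    (h : ∀ x, ∑ i ∈ range n, a i * x ^ i = ∑ i ∈ range n, b i * x ^ i) :
    ∀ i < n, a i = b i := by
  have hpoly : ∑ j ∈ range n, C (a j) * X ^ j = ∑ j ∈ range n, C (b j) * X ^ j :=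
    Polynomial.funext fun x => by simpa [eval_finsetSum] using h x
  intro i hi
  simpa [finsetSum_coeff, coeff_C_mul_X_pow, hi] using congr_arg (coeff · i) hpoly

noncomputable def hCoeff : ℕ → ℝ
  | 0 => 100 / 81
  | 2 => -80 / 27
  | 4 => 68 / 27
  | 6 => -8 / 9
  | 8 => 1 / 9
  | _ => 0

theorem sq_eq_sum_hCoeff (x : ℝ) :
    (10 / 9 - (4 / 3) * x ^ 2 + (1 / 3) * x ^ 4) ^ 2 = ∑ i ∈ range 9, hCoeff i * x ^ i := by
  simp only [sum_range_succ, sum_range_zero, hCoeff]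
  ring

theorem poly_h_properties (h : ℝ → ℝ)
    (hh : ∀ x, h x = (10 / 9 - (4 / 3) * x ^ 2 + (1 / 3) * x ^ 4) ^ 2)
    (a : ℕ → ℝ) (ha : ∀ x, h x = ∑ i ∈ Finset.range 9, a i * x ^ i) :
    (∀ x : ℝ, 0 ≤ h x) ∧
    h 0 = 100 / 81 ∧ (1 : ℝ) < 100 / 81 ∧
    (∑ i ∈ Finset.range 5,
        a (2 * i) * ((Nat.choose (2 * i) i : ℝ) - (Nat.choose (2 * i) (i + 1) : ℝ)))
      = 34 / 81 ∧
    (34 / 81 : ℝ) < 1 / 2 := by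
  have ha_eq : ∀ i < 9, a i = hCoeff i :=
    coeff_eq_of_forall_sum_eq fun x => by rw [← ha, hh, sq_eq_sum_hCoeff]
  have hsum : ∑ i ∈ range 5, a (2 * i) * ((2 * i).choose i - (2 * i).choose (i + 1) : ℝ)
      = ∑ i ∈ range 5, hCoeff (2 * i) * catalan i := by
    refine sum_congr rfl fun i hi => ?_
    rw [ha_eq _ (by simp at hi; omega), catalan_eq_choose_sub_choose]
  refine ⟨fun x => hh x ▸ sq_nonneg _, by norm_num [hh], by norm_num, ?_, by norm_num⟩
  rw [hsum]
  norm_num [sum_range_succ, hCoeff, catalan_two, catalan_three, catalan_four]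
end
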